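/- Let d ≥ 1, η > 0, and let ℓ̂_1, …, ℓ̂_N : Fin d → ℝ be loss vectors with ℓ̂_n(a) ≥ 0 for all n and a. Let x_1, …, x_N be produced by the exponential-weights update with learning rate η. Then for every a* ∈ Fin d: ∑_{n=1}^N ∑_a ℓ̂_n(a)·x_n(a) ≤ ∑_{n=1}^N ℓ̂_n(a*) + η·∑_{n=1}^N ∑_a ℓ̂_n(a)²·x_n(a) + (log d)/η. (Paper's Lemma 2: deterministic regret inequality for online mirror descent with the negative-entropy regularizer and an arbitrary sequence of nonnegative loss vectors.) -/

import Mathlib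

/-- The exponential-weights update with learning rate `η` for the loss vectors
`L 0, L 1, …`:  `expWeights d η L n` is the strategy used at round `n`
(0-indexed, so round `n` here is round `n+1` of the paper), starting from the
uniform distribution, with the multiplicative update driven by `L n`. -/
noncomputable def expWeights (d : ℕ) (η : ℝ) (L : ℕ → Fin d → ℝ) : ℕ → Fin d → ℝ
  | 0 => fun _ => 1 / d
  | n + 1 => fun a =>
      expWeights d η L n a * Real.exp (-η * L n a)
        / ∑ b : Fin d, expWeights d η L n b * Real.exp (-η * L n b)

/-!
Let `Z_n = ∑_a x_n(a) exp(-η ℓ̂_n(a))` be the normaliser of the update. Unrolling the recursion,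
`x_N(a) ∏_{n<N} Z_n = exp(-η ∑_{n<N} ℓ̂_n(a)) / d`, and `x_N(a*) ≤ 1` turns this into the lower
bound `∑_n log Z_n ≥ -log d - η ∑_n ℓ̂_n(a*)`. On the other hand, `exp(-y) ≤ 1 - y + y²` for
`y ≥ 0` and `log z ≤ z - 1` give `log Z_n ≤ -η ⟨ℓ̂_n, x_n⟩ + η² ⟨ℓ̂_n², x_n⟩`. Comparing the two
bounds and dividing by `η` gives the regret inequality.
-/

open Finset Real

lemma exp_neg_le_one_sub_add_sq {y : ℝ} (hy : 0 ≤ y) : exp (-y) ≤ 1 - y + y ^ 2 := by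
  have hexp : exp (-y) * exp y = 1 := by rw [← exp_add, neg_add_cancel, exp_zero]
  nlinarith [add_one_le_exp y, exp_pos (-y), pow_nonneg hy 3, sq_nonneg (2 * y - 1)]

lemma log_sum_mul_exp_neg_le {ι : Type*} [Fintype ι] {p v : ι → ℝ} {η : ℝ}
    (hp : ∀ a, 0 ≤ p a) (hp_sum : ∑ a, p a = 1) (hv : ∀ a, 0 ≤ v a) (hη : 0 ≤ η) :
    log (∑ a, p a * exp (-η * v a)) ≤ -η * ∑ a, v a * p a + η ^ 2 * ∑ a, v a ^ 2 * p a := by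
  have hZ : 0 < ∑ a, p a * exp (-η * v a) := by
    obtain ⟨a₀, hpa₀⟩ : ∃ a, 0 < p a := by
      by_contra! h
      linarith [sum_nonpos fun a (_ : a ∈ univ) => h a]
    exact sum_pos' (fun a _ => mul_nonneg (hp a) (exp_pos _).le)
      ⟨a₀, mem_univ a₀, mul_pos hpa₀ (exp_pos _)⟩
  have hexpand : ∀ a, p a * (1 - η * v a + (η * v a) ^ 2)
      = p a - η * (v a * p a) + η ^ 2 * (v a ^ 2 * p a) := fun a => by ring
  calc log (∑ a, p a * exp (-η * v a))
      ≤ ∑ a, p a * exp (-η * v a) - 1 := log_le_sub_one_of_pos hZ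
    _ ≤ ∑ a, p a * (1 - η * v a + (η * v a) ^ 2) - 1 := by
      gcongr ∑ a, ?_ - 1 with a
      rw [neg_mul]
      exact mul_le_mul_of_nonneg_left (exp_neg_le_one_sub_add_sq (mul_nonneg hη (hv a))) (hp a)
    _ = -η * ∑ a, v a * p a + η ^ 2 * ∑ a, v a ^ 2 * p a := by
      simp only [hexpand, sum_add_distrib, sum_sub_distrib, ← mul_sum, hp_sum]
      ring

section expWeights

variable {d : ℕ} {η : ℝ} {L : ℕ → Fin d → ℝ}

noncomputable def expWeightsNormalizer (d : ℕ) (η : ℝ) (L : ℕ → Fin d → ℝ) (n : ℕ) : ℝ :=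
  ∑ b : Fin d, expWeights d η L n b * exp (-η * L n b)

lemma expWeights_pos (n : ℕ) (a : Fin d) : 0 < expWeights d η L n a := by
  induction n generalizing a with
  | zero => simpa [expWeights] using a.pos
  | succ n ih =>
    have hZ : 0 < expWeightsNormalizer d η L n :=
      sum_pos (fun b _ => mul_pos (ih b) (exp_pos _)) ⟨a, mem_univ a⟩
    exact div_pos (mul_pos (ih a) (exp_pos _)) hZ

lemma expWeightsNormalizer_pos [NeZero d] (n : ℕ) : 0 < expWeightsNormalizer d η L n :=
  sum_pos (fun b _ => mul_pos (expWeights_pos n b) (exp_pos _)) univ_nonempty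

lemma expWeights_succ (n : ℕ) (a : Fin d) :
    expWeights d η L (n + 1) a
      = expWeights d η L n a * exp (-η * L n a) / expWeightsNormalizer d η L n :=
  rfl

lemma sum_expWeights [NeZero d] (n : ℕ) : ∑ a, expWeights d η L n a = 1 := by
  cases n with
  | zero => simp [expWeights]
  | succ n =>
    simp_rw [expWeights_succ, ← sum_div]
    exact div_self (expWeightsNormalizer_pos n).ne'

lemma expWeights_le_one (n : ℕ) (a : Fin d) : expWeights d η L n a ≤ 1 := by
  have : NeZero d := NeZero.of_pos a.pos
  rw [← sum_expWeights (η := η) (L := L) n]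
  exact single_le_sum (fun b _ => (expWeights_pos n b).le) (mem_univ a)

lemma expWeights_mul_prod_normalizer (n : ℕ) (a : Fin d) :
    expWeights d η L n a * ∏ k ∈ range n, expWeightsNormalizer d η L k
      = exp (-η * ∑ k ∈ range n, L k a) / d := by
  have : NeZero d := NeZero.of_pos a.pos
  induction n with
  | zero => simp [expWeights]
  | succ n ih =>
    have hZ := (expWeightsNormalizer_pos (η := η) (L := L) n).ne'
    rw [prod_range_succ, sum_range_succ, mul_add, exp_add, mul_div_right_comm, ← ih,
      expWeights_succ]
    field_simp

lemma neg_log_sub_le_sum_log_expWeightsNormalizer (N : ℕ) (a : Fin d) :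
    -log d - η * ∑ n ∈ range N, L n a ≤ ∑ n ∈ range N, log (expWeightsNormalizer d η L n) := by
  have : NeZero d := NeZero.of_pos a.pos
  have hprod :
      exp (-η * ∑ n ∈ range N, L n a) / d ≤ ∏ n ∈ range N, expWeightsNormalizer d η L n := by
    rw [← expWeights_mul_prod_normalizer]
    exact mul_le_of_le_one_left (prod_pos fun n _ => expWeightsNormalizer_pos n).le
      (expWeights_le_one N a)
  have hlog := log_le_log (div_pos (exp_pos _) (Nat.cast_pos.mpr a.pos)) hprod
  rw [log_div (exp_pos _).ne' (Nat.cast_pos.mpr a.pos).ne', log_exp,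
    log_prod fun n _ => (expWeightsNormalizer_pos n).ne'] at hlog
  linarith

lemma log_expWeightsNormalizer_le [NeZero d] (hη : 0 ≤ η) (hL : ∀ n a, 0 ≤ L n a) (n : ℕ) :
    log (expWeightsNormalizer d η L n)
      ≤ -η * ∑ a, L n a * expWeights d η L n a + η ^ 2 * ∑ a, L n a ^ 2 * expWeights d η L n a :=
  log_sum_mul_exp_neg_le (fun a => (expWeights_pos n a).le) (sum_expWeights n) (hL n) hη

end expWeights

theorem stmt_6_general (d N : ℕ) (η : ℝ) (hη : 0 < η)
    (L : ℕ → Fin d → ℝ) (hL : ∀ n a, 0 ≤ L n a) (astar : Fin d) :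
    ∑ n ∈ Finset.range N, ∑ a : Fin d, L n a * expWeights d η L n a
      ≤ ∑ n ∈ Finset.range N, L n astar
        + η * ∑ n ∈ Finset.range N, ∑ a : Fin d, (L n a) ^ 2 * expWeights d η L n a
        + Real.log d / η := by
  have : NeZero d := NeZero.of_pos astar.pos
  have hpotential := (neg_log_sub_le_sum_log_expWeightsNormalizer N astar).trans
    (sum_le_sum fun n _ => log_expWeightsNormalizer_le hη.le hL n)
  rw [sum_add_distrib, ← mul_sum, ← mul_sum] at hpotential
  rw [← sub_le_iff_le_add', le_div_iff₀ hη]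
  linear_combination hpotential

/-- Paper's Lemma 2: deterministic regret inequality for online mirror descent
with the negative-entropy regularizer and nonnegative loss vectors. -/
theorem stmt_6 (d N : ℕ) (hd : 1 ≤ d) (hN : 1 ≤ N) (η : ℝ) (hη : 0 < η)
    (L : ℕ → Fin d → ℝ) (hL : ∀ n a, 0 ≤ L n a) (astar : Fin d) :
    ∑ n ∈ Finset.range N, ∑ a : Fin d, L n a * expWeights d η L n a
      ≤ ∑ n ∈ Finset.range N, L n astar
        + η * ∑ n ∈ Finset.range N, ∑ a : Fin d, (L n a) ^ 2 * expWeights d η L n a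
        + Real.log d / η :=
  stmt_6_general d N η hη L hL astar
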